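/- arXiv:1808.05046 — 3 statements merged into one kernel-verified Lean document; each statement's English description precedes it below -/
import Mathlib

section
/- Let a < 0, b > 0, c > 0 and 0 < ω̲ ≤ ω̄ be real numbers, and let d, e ∈ ℝ satisfy d·q + e ≥ a·q² + b·ω̲·q + c·ω̲² for all q ∈ ℝ. Then for every Q ≥ 0 and every H with d·Q + e ≤ H ≤ a·Q² + b·ω̄·Q + c·ω̄², there exists ω ∈ [ω̲, ω̄] such that H = a·Q² + b·Q·ω + c·ω². In other words, the convex set {(Q,H) : Q ≥ 0, d·Q + e ≤ H ≤ a·Q² + b·ω̄·Q + c·ω̄²} is an inner approximation of (is contained in) the pump feasibility set {(Q,H) : Q ≥ 0, ∃ ω ∈ [ω̲, ω̄], H = a·Q² + b·Q·ω + c·ω²}. -/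
theorem pump_exists_aux (a b c ωlo ωhi d e : ℝ)
    (hω : ωlo ≤ ωhi)
    (hline : ∀ q : ℝ, a * q ^ 2 + b * ωlo * q + c * ωlo ^ 2 ≤ d * q + e) :
    ∀ Q H : ℝ, 0 ≤ Q → d * Q + e ≤ H → H ≤ a * Q ^ 2 + b * ωhi * Q + c * ωhi ^ 2 →
      ∃ ω : ℝ, ωlo ≤ ω ∧ ω ≤ ωhi ∧ H = a * Q ^ 2 + b * Q * ω + c * ω ^ 2 := by
  intro Q H _ h1 h2
  set f : ℝ → ℝ := fun ω => a * Q ^ 2 + b * Q * ω + c * ω ^ 2 with hf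
  have hcont : ContinuousOn f (Set.Icc ωlo ωhi) := by
    apply Continuous.continuousOn; fun_prop
  have hmem : H ∈ Set.Icc (f ωlo) (f ωhi) := by
    constructor
    · calc f ωlo = a * Q ^ 2 + b * ωlo * Q + c * ωlo ^ 2 := by ring
      _ ≤ d * Q + e := hline Q
      _ ≤ H := h1
    · calc H ≤ a * Q ^ 2 + b * ωhi * Q + c * ωhi ^ 2 := h2
      _ = f ωhi := by ring
  obtain ⟨ω, hωm, hωH⟩ := intermediate_value_Icc hω hcont hmem
  exact ⟨ω, hωm.1, hωm.2, hωH.symm⟩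

/-- With pump parameters `a < 0`, `b > 0`, `c > 0`, speed bounds
`0 < ω̲ ≤ ω̄`, and a line `d·q + e` lying above the minimum-speed curve
`a·q² + b·ω̲·q + c·ω̲²` for all `q`, every pair `(Q, H)` with `Q ≥ 0` and
`d·Q + e ≤ H ≤ a·Q² + b·ω̄·Q + c·ω̄²` is realized by some speed `ω ∈ [ω̲, ω̄]`,
i.e. the convex set determined by the line and the maximum-speed curve is contained
in the pump feasibility set. -/
theorem pump_inner_approximation (a b c ωlo ωhi d e : ℝ)
    (ha : a < 0) (hb : 0 < b) (hc : 0 < c)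
    (hωlo : 0 < ωlo) (hω : ωlo ≤ ωhi)
    (hline : ∀ q : ℝ, a * q ^ 2 + b * ωlo * q + c * ωlo ^ 2 ≤ d * q + e) :
    (∀ Q H : ℝ, 0 ≤ Q → d * Q + e ≤ H → H ≤ a * Q ^ 2 + b * ωhi * Q + c * ωhi ^ 2 →
      ∃ ω : ℝ, ωlo ≤ ω ∧ ω ≤ ωhi ∧ H = a * Q ^ 2 + b * Q * ω + c * ω ^ 2) ∧
    {qh : ℝ × ℝ | 0 ≤ qh.1 ∧ d * qh.1 + e ≤ qh.2 ∧
        qh.2 ≤ a * qh.1 ^ 2 + b * ωhi * qh.1 + c * ωhi ^ 2} ⊆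
      {qh : ℝ × ℝ | 0 ≤ qh.1 ∧ ∃ ω ∈ Set.Icc ωlo ωhi,
        qh.2 = a * qh.1 ^ 2 + b * qh.1 * ω + c * ω ^ 2} := by
  have key := pump_exists_aux a b c ωlo ωhi d e hω hline
  refine ⟨key, ?_⟩
  rintro ⟨Q, H⟩ ⟨hQ, h1, h2⟩
  obtain ⟨ω, hlo, hhi, heq⟩ := key Q H hQ h1 h2
  exact ⟨hQ, ω, ⟨hlo, hhi⟩, heq⟩
end

section
/- Let V be a finite set and E ⊆ V × V the edge set of a directed graph that is acyclic (no directed cycles) and in which every vertex has at most one incoming edge. Fix an edge (u,v) ∈ E and a real number ε. Define ψ : V → ℝ by ψ(w) = ε if w = v or w is reachable from v by a directed path, and ψ(w) = 0 otherwise. Then ψ(v) − ψ(u) = ε, and ψ(j) − ψ(i) = 0 for every edge (i,j) ∈ E with (i,j) ≠ (u,v). -/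
open Classical

/-- In a finite directed graph `E ⊆ V × V` that is acyclic (no directed
cycles) and in which every vertex has at most one incoming edge, fix an edge
`(u,v) ∈ E` and `ε ∈ ℝ`, and define `ψ(w) = ε` if `w = v` or `w` is reachable from
`v` by a directed path (of one or more edges), and `ψ(w) = 0` otherwise. Then
`ψ(v) − ψ(u) = ε`, and `ψ(j) − ψ(i) = 0` for every edge `(i,j) ∈ E` other than `(u,v)`. -/
theorem head_shift_along_edges {V : Type*} [Fintype V] [DecidableEq V]
    (E : Set (V × V))
    (hacyc : ∀ w : V, ¬ Relation.TransGen (fun i j => (i, j) ∈ E) w w)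
    (hindeg : ∀ i i' j : V, (i, j) ∈ E → (i', j) ∈ E → i = i')
    (u v : V) (huv : (u, v) ∈ E) (ε : ℝ) :
    let ψ : V → ℝ := fun w =>
      if w = v ∨ Relation.TransGen (fun i j => (i, j) ∈ E) v w then ε else 0
    ψ v - ψ u = ε ∧ ∀ i j : V, (i, j) ∈ E → (i, j) ≠ (u, v) → ψ j - ψ i = 0 := by
  intro ψ
  have hψv : ψ v = ε := by simp [ψ]
  have hψu : ψ u = 0 := by
    have h1 : u ≠ v := by
      rintro rfl
      exact hacyc u (Relation.TransGen.single huv)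
    have h2 : ¬ Relation.TransGen (fun i j => (i, j) ∈ E) v u := by
      intro h
      exact hacyc v (h.tail huv)
    simp [ψ, h1, h2]
  refine ⟨by rw [hψv, hψu]; ring, ?_⟩
  intro i j hij hne
  by_cases hi : i = v ∨ Relation.TransGen (fun a b => (a, b) ∈ E) v i
  · have hj : j = v ∨ Relation.TransGen (fun a b => (a, b) ∈ E) v j := by
      rcases hi with rfl | hi
      · exact Or.inr (Relation.TransGen.single hij)
      · exact Or.inr (hi.tail hij)
    simp [ψ, hi, hj]
  · have hj : ¬ (j = v ∨ Relation.TransGen (fun a b => (a, b) ∈ E) v j) := by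
      rintro (rfl | hj)
      · exact hne (by rw [hindeg i u j hij huv])
      · rcases (Relation.transGen_iff _ _ _).1 hj with h | ⟨k, hvk, hkj⟩
        · exact hi (Or.inl (hindeg i v j hij h))
        · exact hi (Or.inr (by rwa [hindeg i k j hij hkj]))
    simp [ψ, hi, hj]
end

section
/- Under the water network model, suppose in addition that for every pump (i,j)∈P the parameters satisfy a_{i,j} < 0, b_{i,j} > 0, c_{i,j} > 0, 0 < ω̲_{i,j} ≤ ω̄_{i,j}, b̄_{i,j} = b_{i,j}ω̄_{i,j}, c̄_{i,j} = c_{i,j}ω̄_{i,j}², and d_{i,j}q + e_{i,j} ≥ a_{i,j}q² + b_{i,j}ω̲_{i,j}q + c_{i,j}ω̲_{i,j}² for all q ∈ ℝ. Let N1 denote the problem obtained from N2 by replacing, for each pump (i,j)∈P, the two inequalities d_{i,j}Q_{i,j}[k] + e_{i,j} ≤ H_{i,j}[k] ≤ a_{i,j}Q_{i,j}[k]² + b̄_{i,j}Q_{i,j}[k] + c̄_{i,j} with the exact pump curve H_{i,j}[k] = a_{i,j}Q_{i,j}[k]² + b_{i,j}Q_{i,j}[k]ω_{i,j}[k] + c_{i,j}ω_{i,j}[k]²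 for an additional speed variable ω_{i,j}[k] ∈ [ω̲_{i,j}, ω̄_{i,j}]. Then every feasible point of N2 with nonnegative pump flows can be extended (by a suitable choice of the speeds ω_{i,j}[k]) to a feasible point of N1 with the same values of all shared variables and the same objective value; consequently, the optimal value of N2 is a lower bound on the optimal value of N1. -/
open Classical

noncomputable section

/-- The water supply network over a single time slot `k`: a finite directed graph with
node set `J ∪ T ∪ Tf ∪ R` (junctions, tank outlets, fictitious tank inlets, reservoirs),
edge set `P ∪ V ∪ L` (pumps, valves, pipes) plus fictitious edges `Ef` joining tank
inlets to tank outlets, together with all network parameters. -/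
structure WaterNetwork where
  /-- node type -/
  Node : Type
  [fin : Fintype Node]
  [deq : DecidableEq Node]
  /-- junctions -/
  J : Finset Node
  /-- tank outlets -/
  T : Finset Node
  /-- fictitious tank inlets -/
  Tf : Finset Node
  /-- reservoirs -/
  R : Finset Node
  /-- pumps -/
  P : Finset (Node × Node)
  /-- valves (pressure reducing valves) -/
  V : Finset (Node × Node)
  /-- pipes -/
  L : Finset (Node × Node)
  /-- fictitious edges (tank inlet to tank outlet) -/
  Ef : Finset (Node × Node)
  hPV : Disjoint P V
  hPL : Disjoint P L
  hVL : Disjoint V L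
  /-- time-slot length -/
  δ : ℝ
  hδ : 0 < δ
  /-- water demands -/
  D : Node → ℝ
  /-- minimum pressure heads at junctions -/
  Hmin : Node → ℝ
  /-- elevation heads -/
  H0 : Node → ℝ
  /-- tank cross-sectional wetted areas -/
  A : Node → ℝ
  hA : ∀ i ∈ T, 0 < A i
  /-- tank volumes at the previous time slot `k−1` -/
  Vprev : Node → ℝ
  /-- tank pressure heads at the previous time slot `k−1` -/
  Hprev : Node → ℝ
  /-- tank capacities -/
  Vmax : Node → ℝ
  /-- minimum pump flows -/
  Qmin : Node × Node → ℝ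
  /-- maximum pump flows -/
  Qmax : Node × Node → ℝ
  /-- pump curve quadratic coefficients `a_{i,j} < 0` -/
  a : Node × Node → ℝ
  ha : ∀ e ∈ P, a e < 0
  /-- pump curve coefficients `b̄_{i,j}` (maximum speed) -/
  bbar : Node × Node → ℝ
  /-- pump curve coefficients `c̄_{i,j}` (maximum speed) -/
  cbar : Node × Node → ℝ
  /-- pump lower-bounding line slopes `d_{i,j}` -/
  dl : Node × Node → ℝ
  /-- pump lower-bounding line intercepts `e_{i,j}` -/
  el : Node × Node → ℝ
  /-- Darcy–Weisbach friction coefficients `f^d_{i,j} > 0` of pipes -/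
  fd : Node × Node → ℝ
  hfd : ∀ e ∈ L, 0 < fd e
  /-- pump electrical-to-hydraulic efficiencies -/
  η : Node × Node → ℝ
  /-- water density -/
  ρw : ℝ
  /-- gravity constant -/
  grav : ℝ
  /-- demand response signal `r[k]` -/
  r : ℝ

attribute [instance] WaterNetwork.fin WaterNetwork.deq

namespace WaterNetwork

/-- All physical edges `E = P ∪ V ∪ L`. -/
def E (W : WaterNetwork) : Finset (W.Node × W.Node) := W.P ∪ W.V ∪ W.L

/-- Net inflow `Σ_{m∈N_i^-} Q_{m,i} − Σ_{j∈N_i^+} Q_{i,j}` at node `i`. -/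
def netInflow (W : WaterNetwork) (Q : W.Node × W.Node → ℝ) (i : W.Node) : ℝ :=
  (∑ e ∈ (W.E ∪ W.Ef).filter (fun e => e.2 = i), Q e)
    - ∑ e ∈ (W.E ∪ W.Ef).filter (fun e => e.1 = i), Q e

/-- A point of the decision space: flows `Q` on edges, pressure heads `H` at nodes,
head gains/losses `G` on edges, and tank volumes `Vol`. -/
structure Point (W : WaterNetwork) where
  Q : W.Node × W.Node → ℝ
  H : W.Node → ℝ
  G : W.Node × W.Node → ℝ
  Vol : W.Node → ℝ

/-- The objective `Σ_{i∈T} A_i H_i[k]²` of problems N1, N2, and N3. -/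
def obj (W : WaterNetwork) (p : W.Point) : ℝ := ∑ i ∈ W.T, W.A i * p.H i ^ 2

/-- The constraints shared by all the problems: flow conservation at junctions, minimum
junction heads, tank balance, capacity and head dynamics, tank inlet heads, pump flow
bounds, and energy conservation across pumps, valves and pipes (every edge carrying
nonzero flow). -/
def FeasBase (W : WaterNetwork) (p : W.Point) : Prop :=
  (∀ i ∈ W.J, W.netInflow p.Q i = W.D i) ∧
  (∀ i ∈ W.J, W.Hmin i ≤ p.H i) ∧
  (∀ i ∈ W.T, p.Vol i = W.Vprev i + W.δ * W.netInflow p.Q i) ∧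
  (∀ i ∈ W.T, 0 ≤ p.Vol i ∧ p.Vol i ≤ W.Vmax i) ∧
  (∀ i ∈ W.T, p.H i - W.Hprev i = (W.δ / W.A i) * W.netInflow p.Q i) ∧
  (∀ i ∈ W.Tf, W.H0 i ≤ p.H i) ∧
  (∀ e ∈ W.P, W.Qmin e ≤ p.Q e ∧ p.Q e ≤ W.Qmax e) ∧
  (∀ e ∈ W.P, (p.H e.2 + W.H0 e.2) - (p.H e.1 + W.H0 e.1) = p.G e) ∧
  (∀ e ∈ W.V ∪ W.L, 0 < p.Q e ∧ 0 ≤ p.G e ∧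
      (p.H e.2 + W.H0 e.2) - (p.H e.1 + W.H0 e.1) = - p.G e)

/-- The relaxed pump-curve constraints of N2/N3:
`d Q + e ≤ H_{i,j} ≤ a Q² + b̄ Q + c̄` on every pump. -/
def PumpRelaxed (W : WaterNetwork) (p : W.Point) : Prop :=
  ∀ e ∈ W.P, W.dl e * p.Q e + W.el e ≤ p.G e ∧
    p.G e ≤ W.a e * p.Q e ^ 2 + W.bbar e * p.Q e + W.cbar e

/-- The pump energy budget `Σ_{(i,j)∈P} (ρgδ/η_{i,j}) H_{i,j} Q_{i,j} ≤ r δ`. -/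
def EnergyBudget (W : WaterNetwork) (p : W.Point) : Prop :=
  (∑ e ∈ W.P, (W.ρw * W.grav * W.δ / W.η e) * p.G e * p.Q e) ≤ W.r * W.δ

/-- Feasibility for problem N2 (exact Darcy–Weisbach head losses on pipes). -/
def FeasN2 (W : WaterNetwork) (p : W.Point) : Prop :=
  W.FeasBase p ∧ W.PumpRelaxed p ∧ W.EnergyBudget p ∧
  ∀ e ∈ W.L, p.G e = W.fd e * p.Q e ^ 2

/-- Feasibility for problem N3 (second-order-cone relaxation of the pipe head losses,
with auxiliary variables `Wv`). -/
def FeasN3 (W : WaterNetwork) (p : W.Point) (Wv : W.Node × W.Node → ℝ) : Prop :=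
  W.FeasBase p ∧ W.PumpRelaxed p ∧ W.EnergyBudget p ∧
  ∀ e ∈ W.L, p.G e = W.fd e * Wv e ∧ p.Q e ^ 2 ≤ Wv e

/-- The directed edge relation of `G_y` (physical and fictitious edges). -/
def edgeRel (W : WaterNetwork) (i j : W.Node) : Prop := (i, j) ∈ W.E ∪ W.Ef

/-- `j` is downstream of `i`: reachable from `i` by a directed path of one or more edges. -/
def Downstream (W : WaterNetwork) (i j : W.Node) : Prop :=
  Relation.TransGen W.edgeRel i j

/-- `j` is reachable from `i` by a (possibly empty) directed path. -/
def Reach (W : WaterNetwork) (i j : W.Node) : Prop :=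
  Relation.ReflTransGen W.edgeRel i j

/-- The underlying undirected graph of `G_y`. -/
def undirected (W : WaterNetwork) : SimpleGraph W.Node :=
  SimpleGraph.fromRel W.edgeRel

/-- `G_y` is loop-free: its underlying undirected graph has no cycles. -/
def LoopFree (W : WaterNetwork) : Prop := W.undirected.IsAcyclic

/-- `M`: the set of junctions with multiple incoming edges. -/
def Mset (W : WaterNetwork) : Finset W.Node :=
  W.J.filter (fun j => 1 < (W.E.filter (fun e => e.2 = j)).card)

/-- Every incoming edge of every junction with multiple incoming edges is a valve (PRV). -/
def ValvedJunctions (W : WaterNetwork) : Prop :=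
  ∀ j ∈ W.Mset, ∀ e ∈ W.E, e.2 = j → e ∈ W.V

/-- `N_{i,j}`: the set of tank outlets and junctions with multiple incoming pipes lying
on directed paths from `i` to `j`, including `j`. -/
def Nset (W : WaterNetwork) (i j : W.Node) : Finset W.Node :=
  (W.T ∪ W.Mset).filter (fun m => W.Reach i m ∧ W.Reach m j)

/-- `E_i = {(i′,j′) ∈ L : i is downstream of i′ and N_{j′,i} = ∅}`. -/
def Eset (W : WaterNetwork) (i : W.Node) : Finset (W.Node × W.Node) :=
  W.L.filter (fun e => W.Downstream e.1 i ∧ W.Nset e.2 i = ∅)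

/-- `ε_{i′,j′}[k] = f^d_{i′,j′}(W*_{i′,j′}[k] − (Q*_{i′,j′}[k])²)` for a pipe `(i′,j′)`. -/
def eps (W : WaterNetwork) (p : W.Point) (Wv : W.Node × W.Node → ℝ)
    (e : W.Node × W.Node) : ℝ :=
  W.fd e * (Wv e - p.Q e ^ 2)

/-- `ψ_i[k] = Σ_{(i′,j′)∈E_i} ε_{i′,j′}[k]`. -/
def psi (W : WaterNetwork) (p : W.Point) (Wv : W.Node × W.Node → ℝ) (i : W.Node) : ℝ :=
  ∑ e ∈ W.Eset i, W.eps p Wv e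

end WaterNetwork

namespace WaterNetwork

/-- Feasibility for problem N1: the constraints of N2 with the relaxed pump-head
inequalities replaced, for each pump, by the exact pump curve
`H_{i,j} = a Q² + b Q ω + c ω²` for a speed variable `ω_{i,j} ∈ [ω̲_{i,j}, ω̄_{i,j}]`. -/
def FeasN1 (W : WaterNetwork) (b c ωlo ωhi : W.Node × W.Node → ℝ)
    (p : W.Point) (ω : W.Node × W.Node → ℝ) : Prop :=
  W.FeasBase p ∧
  (∀ e ∈ W.P, ωlo e ≤ ω e ∧ ω e ≤ ωhi e) ∧
  (∀ e ∈ W.P, p.G e = W.a e * p.Q e ^ 2 + b e * p.Q e * ω e + c e * ω e ^ 2) ∧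
  W.EnergyBudget p ∧
  (∀ e ∈ W.L, p.G e = W.fd e * p.Q e ^ 2)

end WaterNetwork

/-- Suppose every pump `(i,j)` has parameters `a < 0`, `b > 0`, `c > 0`,
speeds `0 < ω̲ ≤ ω̄`, with `b̄ = b ω̄`, `c̄ = c ω̄²`, the line `d q + e` lying above the
minimum-speed curve for all `q`, and nonnegative flow bounds. Then every feasible point
of N2 with nonnegative pump flows extends, by a suitable choice of pump speeds, to a
feasible point of N1 with the same values of all shared variables (hence the same
objective value); consequently the optimal value of N2 is a lower bound on the optimal
value of N1. -/
theorem N2_lower_bounds_N1 (W : WaterNetwork)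
    (b c ωlo ωhi : W.Node × W.Node → ℝ)
    (hb : ∀ e ∈ W.P, 0 < b e) (hc : ∀ e ∈ W.P, 0 < c e)
    (hωlo : ∀ e ∈ W.P, 0 < ωlo e) (hωle : ∀ e ∈ W.P, ωlo e ≤ ωhi e)
    (hbbar : ∀ e ∈ W.P, W.bbar e = b e * ωhi e)
    (hcbar : ∀ e ∈ W.P, W.cbar e = c e * ωhi e ^ 2)
    (hline : ∀ e ∈ W.P, ∀ q : ℝ,
      W.a e * q ^ 2 + b e * ωlo e * q + c e * ωlo e ^ 2 ≤ W.dl e * q + W.el e)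
    (hQmin : ∀ e ∈ W.P, 0 ≤ W.Qmin e) :
    (∀ p : W.Point, W.FeasN2 p → (∀ e ∈ W.P, 0 ≤ p.Q e) →
      ∃ ω : W.Node × W.Node → ℝ, W.FeasN1 b c ωlo ωhi p ω) ∧
    (∀ (p pstar : W.Point) (ωstar : W.Node × W.Node → ℝ),
      W.FeasN2 p → W.FeasN1 b c ωlo ωhi pstar ωstar →
      (∀ (p' : W.Point) (ω' : W.Node × W.Node → ℝ),
        W.FeasN1 b c ωlo ωhi p' ω' → W.obj p' ≤ W.obj pstar) →
      W.obj p ≤ W.obj pstar) := by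
  have key : ∀ p : W.Point, W.FeasN2 p → (∀ e ∈ W.P, 0 ≤ p.Q e) →
      ∃ ω : W.Node × W.Node → ℝ, W.FeasN1 b c ωlo ωhi p ω := by
    intro p hfeas hQpos
    obtain ⟨hbase, hpump, henergy, hpipe⟩ := hfeas
    have hex : ∀ e ∈ W.P, ∃ x ∈ Set.Icc (ωlo e) (ωhi e),
        W.a e * p.Q e ^ 2 + b e * p.Q e * x + c e * x ^ 2 = p.G e := by
      intro e he
      set f : ℝ → ℝ := fun x => W.a e * p.Q e ^ 2 + b e * p.Q e * x + c e * x ^ 2 with hf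
      have hcont : ContinuousOn f (Set.Icc (ωlo e) (ωhi e)) := by
        apply Continuous.continuousOn; fun_prop
      have hivt := intermediate_value_Icc (hωle e he) hcont
      have hlo : f (ωlo e) ≤ p.G e := by
        have h1 := hline e he (p.Q e)
        have h2 := (hpump e he).1
        simp only [hf]
        nlinarith
      have hhi : p.G e ≤ f (ωhi e) := by
        have h2 := (hpump e he).2
        simp only [hf]
        rw [hbbar e he, hcbar e he] at h2
        nlinarith
      obtain ⟨x, hx, hfx⟩ := hivt ⟨hlo, hhi⟩
      exact ⟨x, hx, hfx⟩
    classical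
    refine ⟨fun e => if h : ∃ x ∈ Set.Icc (ωlo e) (ωhi e),
        W.a e * p.Q e ^ 2 + b e * p.Q e * x + c e * x ^ 2 = p.G e
      then h.choose else 0, hbase, ?_, ?_, henergy, hpipe⟩
    · intro e he
      have h := hex e he
      simp only [dif_pos h]
      exact ⟨h.choose_spec.1.1, h.choose_spec.1.2⟩
    · intro e he
      have h := hex e he
      simp only [dif_pos h]
      exact h.choose_spec.2.symm
  refine ⟨key, ?_⟩
  intro p pstar ωstar hp hpstar hopt
  have hQpos : ∀ e ∈ W.P, 0 ≤ p.Q e := fun e he =>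
    le_trans (hQmin e he) (hp.1.2.2.2.2.2.2.1 e he).1
  obtain ⟨ω, hω⟩ := key p hp hQpos
  exact hopt p ω hω
end
end
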